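/- With notation as follows, for every k ≥ n the identity p_k(c|y) = Σ_{i=0}^{k-1} binom(k-n, i) (-y₀)^i p̃_{k-i}(h|y) holds in Λ[y₁,...,yₙ]. -/

import Mathlib

/-! Write `g = t/(1 - y₀t) = t·W` with `W = 1/(1 - y₀t)`, so `g' = W²` and
`1 + (yᵢ - y₀)t = (1 + yᵢ g)(1 - y₀t)`. The chain rule for `H = C ∘ g` gives `P̃ = P(g)·W²` and
`Ẽ = E(g)·(1 - y₀t)ⁿ`, hence `P̃Ẽ·(1 - y₀t)^(k-n) = (PE)(g)·(1 - y₀t)^k·W²`. The coefficient of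
`t^(k-1)` on the left is the binomial sum; on the right only the term `t^(k-1)` of `(PE)(g)`
contributes, since `g^j (1 - y₀t)^k W² = t^j (1 - y₀t)^(k-2-j)` for `j < k - 1`. -/

/-- Substitution of a power series `g` with zero constant term into `F`. -/
noncomputable def substS {R : Type*} [CommRing R] (g F : PowerSeries R) : PowerSeries R :=
  PowerSeries.mk fun n =>
    ∑ k ∈ Finset.range (n + 1), PowerSeries.coeff k F * PowerSeries.coeff n (g ^ k)

/-- The ring `Λ[y₁,…,yₙ]`: `X (inl k)` is `c_k` (`k ≥ 1`), `X (inr i)` is `y_{i+1}`. -/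
abbrev Lam (n : ℕ) := MvPolynomial (ℕ ⊕ Fin n) ℤ

noncomputable def cL (n : ℕ) : ℕ → Lam n :=
  fun k => if k = 0 then 1 else MvPolynomial.X (.inl k)

noncomputable def yL (n : ℕ) : Fin n → Lam n := fun i => MvPolynomial.X (.inr i)

/-- `y₀ = yₙ`. -/
noncomputable def y0L (n : ℕ) : Lam n :=
  if h : 0 < n then yL n ⟨n - 1, Nat.sub_lt h one_pos⟩ else 0

/-- `C(t) = Σ c_k t^k`. -/
noncomputable def CL (n : ℕ) : PowerSeries (Lam n) := PowerSeries.mk (cL n)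

/-- `t/(1 - y₀t)`. -/
noncomputable def gL (n : ℕ) : PowerSeries (Lam n) :=
  PowerSeries.mk fun m => if m = 0 then 0 else y0L n ^ (m - 1)

/-- `H(t) = C(t/(1-y₀t))`. -/
noncomputable def HL (n : ℕ) : PowerSeries (Lam n) := substS (gL n) (CL n)

/-- `E(t) = Π_{i=1}^n (1 + y_i t)`. -/
noncomputable def EL (n : ℕ) : PowerSeries (Lam n) :=
  ∏ i : Fin n, (1 + PowerSeries.C (yL n i) * PowerSeries.X)

/-- `Ẽ(t) = Π_{i=1}^n (1 + (y_i - y₀) t)`. -/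
noncomputable def EtL (n : ℕ) : PowerSeries (Lam n) :=
  ∏ i : Fin n, (1 + PowerSeries.C (yL n i - y0L n) * PowerSeries.X)

namespace PowerSeries

variable {R : Type*} [CommRing R]

theorem coeff_pow_of_lt {g : R⟦X⟧} (hg : constantCoeff g = 0) {j m : ℕ} (h : m < j) :
    coeff m (g ^ j) = 0 :=
  X_pow_dvd_iff.mp (pow_dvd_pow_of_dvd (X_dvd_iff.mpr hg) j) m h

theorem substS_eq_subst {g : R⟦X⟧} (hg : constantCoeff g = 0) (F : R⟦X⟧) :
    substS g F = F.subst g := by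
  ext m
  rw [coeff_subst' (HasSubst.of_constantCoeff_zero' hg), substS, coeff_mk,
    finsum_eq_sum_of_support_subset _ (s := Finset.range (m + 1))]
  · simp only [smul_eq_mul]
  · intro j hj
    by_contra h
    simp only [Finset.coe_range, Set.mem_Iio, not_lt] at h
    simp [coeff_pow_of_lt hg (Nat.lt_of_succ_le h)] at hj

theorem coeff_subst_mul {g : R⟦X⟧} (hg : constantCoeff g = 0) (F Z : R⟦X⟧) (m : ℕ) :
    coeff m (F.subst g * Z) = ∑ j ∈ Finset.range (m + 1), coeff j F * coeff m (g ^ j * Z) := by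
  rw [← substS_eq_subst hg, coeff_mul]
  simp only [substS, coeff_mk, Finset.sum_mul, coeff_mul, Finset.mul_sum]
  rw [Finset.sum_comm]
  refine Finset.sum_congr rfl fun ij hij => ?_
  have hle : ij.1 ≤ m := Finset.HasAntidiagonal.antidiagonal.fst_le hij
  refine (Finset.sum_subset (Finset.range_subset_range.2 (by omega)) fun j _ hj => ?_).trans
    (Finset.sum_congr rfl fun j _ => mul_assoc _ _ _)
  rw [coeff_pow_of_lt hg (by simpa using hj), mul_zero, zero_mul]

theorem coeff_one_sub_C_mul_X_pow (a : R) (m d : ℕ) :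
    coeff d ((1 - C a * X) ^ m) = m.choose d * (-a) ^ d := by
  have : (1 - C a * X : R⟦X⟧) ^ m =
      rescale (-a) (((1 + Polynomial.X) ^ m : Polynomial R) : R⟦X⟧) := by
    simp [sub_eq_add_neg]
  rw [this, coeff_rescale, Polynomial.coeff_coe, Polynomial.coeff_one_add_X_pow, mul_comm]

theorem rescale_mk_one_mul_one_sub_C_mul_X (a : R) :
    rescale a (mk 1) * (1 - C a * X) = 1 := by
  simpa [rescale_X] using congrArg (rescale a) (mk_one_mul_one_sub_eq_one R)

theorem coeff_mul_one_sub_C_mul_X_pow (a : R) (F : R⟦X⟧) (m K : ℕ) :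
    coeff K (F * (1 - C a * X) ^ m) =
      ∑ i ∈ Finset.range (K + 1), (m.choose i : R) * (-a) ^ i * coeff (K - i) F := by
  rw [mul_comm, coeff_mul, Finset.Nat.sum_antidiagonal_eq_sum_range_succ
    (fun i j => coeff i ((1 - C a * X) ^ m) * coeff j F)]
  simp only [coeff_one_sub_C_mul_X_pow]

theorem logDeriv_subst {g F P Q : R⟦X⟧} (hg : constantCoeff g = 0)
    (hF : IsUnit (constantCoeff F)) (hP : P * F = d⁄dX R F)
    (hQ : Q * F.subst g = d⁄dX R (F.subst g)) : Q = P.subst g * d⁄dX R g := by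
  have hg' := HasSubst.of_constantCoeff_zero' hg
  have hunit : IsUnit (F.subst g) := by
    rw [isUnit_iff_constantCoeff, ← coeff_zero_eq_constantCoeff_apply, ← substS_eq_subst hg]
    simpa [substS] using hF
  rw [← hunit.mul_left_inj, hQ, derivative_subst hg', ← hP, subst_mul hg']
  ring

variable {a : R} {W : R⟦X⟧}

theorem derivative_X_mul_of_mul_one_sub_C_mul_X (hW : W * (1 - C a * X) = 1) :
    d⁄dX R (X * W) = W ^ 2 := by
  have h := congrArg (d⁄dX R) (show X * W * (1 - C a * X) = X by rw [mul_assoc, hW, mul_one])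
  simp only [Derivation.leibniz, map_sub, Derivation.map_one_eq_zero, derivative_X, smul_eq_mul,
    mul_one, derivative_C, mul_zero, add_zero, zero_sub, mul_neg] at h ⊢
  linear_combination (-(X * d⁄dX R W + W + W)) * hW + W * h

theorem prod_subst_mul_pow_card (hW : W * (1 - C a * X) = 1) {ι : Type*} (s : Finset ι)
    (y : ι → R) :
    (∏ i ∈ s, (1 + C (y i) * X)).subst (X * W) * (1 - C a * X) ^ s.card =
      ∏ i ∈ s, (1 + C (y i - a) * X) := by
  have hg : HasSubst (X * W) := HasSubst.of_constantCoeff_zero' (by simp)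
  rw [← coe_substAlgHom hg, map_prod, Finset.prod_mul_pow_card]
  refine Finset.prod_congr rfl fun i _ => ?_
  rw [map_add, map_one, map_mul, ← algebraMap_eq, AlgHom.commutes, algebraMap_eq,
    substAlgHom_X, map_sub]
  linear_combination (C (y i) * X) * hW

theorem coeff_subst_X_mul_mul_pow_mul_sq (hW : W * (1 - C a * X) = 1) (F : R⟦X⟧) (K : ℕ) :
    coeff K (F.subst (X * W) * ((1 - C a * X) ^ (K + 1) * W ^ 2)) = coeff K F := by
  rw [coeff_subst_mul (by simp), Finset.sum_eq_single K]
  · have hW0 : constantCoeff W = 1 := by simpa using congrArg constantCoeff hW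
    rw [show (X * W) ^ K * ((1 - C a * X) ^ (K + 1) * W ^ 2)
        = X ^ K * W * (W ^ (K + 1) * (1 - C a * X) ^ (K + 1)) by ring,
      ← mul_pow, hW, one_pow, mul_one, coeff_X_pow_mul', if_pos le_rfl, Nat.sub_self,
      coeff_zero_eq_constantCoeff_apply, hW0, mul_one]
  · intro j hj hjK
    obtain ⟨m, rfl⟩ : ∃ m, K = j + 1 + m := ⟨K - j - 1, by simp at hj; omega⟩
    rw [show (X * W) ^ j * ((1 - C a * X) ^ (j + 1 + m + 1) * W ^ 2)
        = X ^ j * (1 - C a * X) ^ m * (W ^ (j + 2) * (1 - C a * X) ^ (j + 2)) by ring,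
      ← mul_pow, hW, one_pow, mul_one, coeff_X_pow_mul', if_pos (by omega),
      coeff_one_sub_C_mul_X_pow, Nat.choose_eq_zero_of_lt (by omega), Nat.cast_zero, zero_mul,
      mul_zero]
  · simp

end PowerSeries

open PowerSeries

theorem gL_eq_X_mul_rescale (n : ℕ) : gL n = X * rescale (y0L n) (mk 1) := by
  ext m
  cases m <;> simp [gL, coeff_rescale]

theorem isUnit_constantCoeff_CL (n : ℕ) : IsUnit (constantCoeff (CL n)) := by
  simp [CL, cL, ← coeff_zero_eq_constantCoeff_apply]

/-- For `k ≥ n`: `p_k(c|y) = Σ_{i=0}^{k-1} binom(k-n,i) (-y₀)^i p̃_{k-i}(h|y)`. -/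
theorem stmt7 (n : ℕ) (hn : 0 < n) (p pt pcy phy : ℕ → Lam n)
    (hp : (PowerSeries.mk fun j => p (j + 1)) * CL n = (CL n).derivativeFun)
    (hpt : (PowerSeries.mk fun j => pt (j + 1)) * HL n = (HL n).derivativeFun)
    (hpcy : (PowerSeries.mk fun j => pcy (j + 1)) =
      (PowerSeries.mk fun j => p (j + 1)) * EL n)
    (hphy : (PowerSeries.mk fun j => phy (j + 1)) =
      (PowerSeries.mk fun j => pt (j + 1)) * EtL n)
    (k : ℕ) (hk : n ≤ k) :
    pcy k = ∑ i ∈ Finset.range k, ((k - n).choose i : Lam n) * (-y0L n) ^ i * phy (k - i) := by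
  obtain ⟨K, rfl⟩ : ∃ K, k = K + 1 := ⟨k - 1, by omega⟩
  obtain ⟨m, hm⟩ : ∃ m, K + 1 = n + m := ⟨K + 1 - n, by omega⟩
  obtain ⟨W, hW, hg⟩ : ∃ W, W * (1 - C (y0L n) * X) = 1 ∧ gL n = X * W :=
    ⟨_, rescale_mk_one_mul_one_sub_C_mul_X _, gL_eq_X_mul_rescale n⟩
  have hg0 : constantCoeff (X * W) = 0 := by simp
  have hH : HL n = (CL n).subst (X * W) := by rw [HL, hg, substS_eq_subst hg0]
  have hpt_subst : (mk fun j => pt (j + 1)) = (mk fun j => p (j + 1)).subst (X * W) * W ^ 2 := by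
    rw [← derivative_X_mul_of_mul_one_sub_C_mul_X hW]
    exact logDeriv_subst hg0 (isUnit_constantCoeff_CL n) hp (hH ▸ hpt)
  have hEt : EtL n = (EL n).subst (X * W) * (1 - C (y0L n) * X) ^ n := by
    rw [EtL, EL, ← prod_subst_mul_pow_card hW, Finset.card_univ, Fintype.card_fin]
  have hphy_mul : (mk fun j => phy (j + 1)) * (1 - C (y0L n) * X) ^ m =
      (mk fun j => pcy (j + 1)).subst (X * W) * ((1 - C (y0L n) * X) ^ (K + 1) * W ^ 2) := by
    rw [hphy, hpt_subst, hEt, hpcy, subst_mul (HasSubst.of_constantCoeff_zero' hg0), hm, pow_add]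
    ring
  have hcoeff := congrArg (coeff K) hphy_mul
  rw [coeff_mul_one_sub_C_mul_X_pow, coeff_subst_X_mul_mul_pow_mul_sq hW] at hcoeff
  simp only [coeff_mk] at hcoeff
  rw [← hcoeff, show K + 1 - n = m by omega]
  refine Finset.sum_congr rfl fun i hi => ?_
  rw [show K - i + 1 = K + 1 - i by simp at hi; omega]
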